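/- Let G be a group with subgroups A, B, C ≤ G such that: C normalizes B, B ∩ C = {e}; the product BC normalizes A; A ∩ BC = {e}; and G = ABC (so G is the ternary inner semidirect product [A[BC]]). Let S ⊆ G satisfy S ⊆ A ∪ B ∪ C (atomic). Then: (i) ⟨S⟩ ∩ C = ⟨S ∩ C⟩; (ii) ⟨S⟩ ∩ B = ⟨(S ∩ B)^{⟨S ∩ C⟩}⟩, the subgroup generated by { c b c⁻¹ : b ∈ S ∩ B, c ∈ ⟨S ∩ C⟩ }; (iii) ⟨S⟩ ∩ A = ⟨(S ∩ A)^{(⟨S⟩ ∩ B)(⟨S⟩ ∩ C)}⟩, the subgroup generated by { k a k⁻¹ : a ∈ S ∩ A, k ∈ (⟨S⟩ ∩ B)(⟨S⟩ ∩ C) }; and (iv) every h ∈ ⟨S⟩ can be written h = a·b·c with a ∈ ⟨S⟩ ∩ A, b ∈ ⟨S⟩ ∩ B, c ∈ ⟨S⟩ ∩ C. -/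

import Mathlib

/-!
An atomic generating set splits as `(S ∩ A) ∪ (S ∩ B) ∪ (S ∩ C)`. For a set `T` and a subgroup `K`,
`⟨T⟩ ⊔ K = ⟨T^K⟩ ⊔ K`, and `K` normalizes `⟨T^K⟩`, so this join is the product set `⟨T^K⟩ K`.
Applying this first to `S ∩ B` and `C₁ = ⟨S ∩ C⟩`, then to `S ∩ A` and `K = B₁ C₁`, gives
`⟨S⟩ = A₁ B₁ C₁` with `A₁ ≤ A`, `B₁ ≤ B`, `C₁ ≤ C`. Uniqueness of factorisations in the iterated
semidirect product `A ⋊ (B ⋊ C)` then identifies `⟨S⟩ ∩ A`, `⟨S⟩ ∩ B` and `⟨S⟩ ∩ C` with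
`A₁`, `B₁` and `C₁`.
-/

open Pointwise

namespace Subgroup

variable {G : Type*} [Group G]

/-- The paper's `T^K`. -/
def conjugatesBy (K : Subgroup G) (T : Set G) : Set G :=
  {x | ∃ t ∈ T, ∃ k ∈ K, x = k * t * k⁻¹}

theorem subset_conjugatesBy (K : Subgroup G) (T : Set G) : T ⊆ K.conjugatesBy T :=
  fun t ht => ⟨t, ht, 1, one_mem K, by simp⟩

theorem le_normalizer_conjugatesBy (K : Subgroup G) (T : Set G) :
    K ≤ normalizer (K.conjugatesBy T) := by
  intro k hk x
  constructor
  · rintro ⟨t, ht, k', hk', rfl⟩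
    exact ⟨t, ht, k * k', mul_mem hk hk', by group⟩
  · rintro ⟨t, ht, k', hk', hx⟩
    refine ⟨t, ht, k⁻¹ * k', mul_mem (inv_mem hk) hk', ?_⟩
    calc x = k⁻¹ * (k * x * k⁻¹) * k := by group
      _ = k⁻¹ * k' * t * (k⁻¹ * k')⁻¹ := by rw [hx]; group

theorem le_normalizer_closure_conjugatesBy (K : Subgroup G) (T : Set G) :
    K ≤ normalizer (closure (K.conjugatesBy T) : Set G) :=
  (le_normalizer_conjugatesBy K T).trans (normalizer_le_normalizer_closure _)

theorem closure_conjugatesBy_le {K N : Subgroup G} {T : Set G} (hT : T ⊆ N)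
    (hK : K ≤ normalizer (N : Set G)) : closure (K.conjugatesBy T) ≤ N := by
  rw [closure_le]
  rintro _ ⟨t, ht, k, hk, rfl⟩
  exact (mem_normalizer_iff.1 (hK hk) t).1 (hT ht)

theorem closure_sup_eq_closure_conjugatesBy_sup (T : Set G) (K : Subgroup G) :
    closure T ⊔ K = closure (K.conjugatesBy T) ⊔ K := by
  refine le_antisymm (sup_le_sup_right (closure_mono (subset_conjugatesBy K T)) K)
    (sup_le ((closure_le _).2 ?_) le_sup_right)
  rintro _ ⟨t, ht, k, hk, rfl⟩
  have hk' : k ∈ closure T ⊔ K := mem_sup_right hk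
  exact mul_mem (mul_mem hk' (mem_sup_left (subset_closure ht))) (inv_mem hk')

theorem closure_eq_sup_of_subset_union {A B C : Subgroup G} {S : Set G}
    (hS : S ⊆ (A : Set G) ∪ B ∪ C) :
    closure S = closure (S ∩ A) ⊔ (closure (S ∩ B) ⊔ closure (S ∩ C)) := by
  conv_lhs => rw [← Set.inter_eq_left.2 hS]
  rw [Set.inter_union_distrib_left, Set.inter_union_distrib_left, closure_union, closure_union,
    sup_assoc]

theorem mem_sup_iff_of_le_normalizer {N H : Subgroup G} (hH : H ≤ normalizer (N : Set G))
    {g : G} : g ∈ N ⊔ H ↔ ∃ n ∈ N, ∃ h ∈ H, g = n * h := by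
  rw [← SetLike.mem_coe, coe_mul_of_right_le_normalizer_left N H hH, Set.mem_mul]
  simp only [SetLike.mem_coe, eq_comm]

theorem conjugatesBy_sup_eq {N H : Subgroup G} (hH : H ≤ normalizer (N : Set G)) (T : Set G) :
    (N ⊔ H).conjugatesBy T =
      {x | ∃ t ∈ T, ∃ k : G, (∃ n ∈ N, ∃ h ∈ H, k = n * h) ∧ x = k * t * k⁻¹} := by
  ext x
  simp only [conjugatesBy, mem_sup_iff_of_le_normalizer hH]

theorem sup_inf_left_eq_of_disjoint {N H N₁ H₁ : Subgroup G} (hNH : Disjoint N H)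
    (hN₁ : N₁ ≤ N) (hH₁ : H₁ ≤ H) (hnorm : H₁ ≤ normalizer (N₁ : Set G)) : (N₁ ⊔ H₁) ⊓ N = N₁ := by
  have hbot : H₁ ⊓ N = ⊥ := disjoint_iff.1 (hNH.symm.mono hH₁ le_rfl)
  apply SetLike.coe_injective
  rw [coe_inf, coe_mul_of_right_le_normalizer_left N₁ H₁ hnorm, ← mul_inf_assoc N₁ H₁ N hN₁,
    hbot, coe_bot, Set.singleton_one, mul_one]

theorem sup_inf_right_eq_of_disjoint {N H N₁ H₁ : Subgroup G} (hNH : Disjoint N H)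
    (hN₁ : N₁ ≤ N) (hH₁ : H₁ ≤ H) (hnorm : H₁ ≤ normalizer (N₁ : Set G)) : (N₁ ⊔ H₁) ⊓ H = H₁ := by
  have hbot : H ⊓ N₁ = ⊥ := disjoint_iff.1 (hNH.symm.mono le_rfl hN₁)
  apply SetLike.coe_injective
  rw [coe_inf, coe_mul_of_right_le_normalizer_left N₁ H₁ hnorm, Set.inter_comm,
    ← inf_mul_assoc H N₁ H₁ hH₁, hbot, coe_bot, Set.singleton_one, one_mul]

end Subgroup

open Subgroup

theorem stmt_6_general {G : Type*} [Group G] (A B C : Subgroup G)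
    (hCnormB : C ≤ Subgroup.normalizer (B : Set G))
    (hBC : B ⊓ C = ⊥)
    (hBCnormA : ∀ k : G, (∃ b ∈ B, ∃ c ∈ C, k = b * c) → k ∈ Subgroup.normalizer (A : Set G))
    (hABC : ∀ x : G, x ∈ A → (∃ b ∈ B, ∃ c ∈ C, x = b * c) → x = 1)
    (S : Set G) (hS : S ⊆ (A : Set G) ∪ (B : Set G) ∪ (C : Set G)) :
    Subgroup.closure S ⊓ C = Subgroup.closure (S ∩ (C : Set G)) ∧
    Subgroup.closure S ⊓ B =
      Subgroup.closure
        {x | ∃ b ∈ S ∩ (B : Set G), ∃ c ∈ Subgroup.closure (S ∩ (C : Set G)),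
          x = c * b * c⁻¹} ∧
    Subgroup.closure S ⊓ A =
      Subgroup.closure
        {x | ∃ a ∈ S ∩ (A : Set G), ∃ k : G,
          (∃ b ∈ Subgroup.closure S ⊓ B, ∃ c ∈ Subgroup.closure S ⊓ C, k = b * c) ∧
          x = k * a * k⁻¹} ∧
    (∀ h ∈ Subgroup.closure S,
      ∃ a ∈ Subgroup.closure S ⊓ A, ∃ b ∈ Subgroup.closure S ⊓ B,
        ∃ c ∈ Subgroup.closure S ⊓ C, h = a * b * c) := by
  have hBCnormA' : B ⊔ C ≤ normalizer (A : Set G) :=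
    fun k hk => hBCnormA k ((mem_sup_iff_of_le_normalizer hCnormB).1 hk)
  have hA_BC : Disjoint A (B ⊔ C) := disjoint_def.2 fun hxA hxBC =>
    hABC _ hxA ((mem_sup_iff_of_le_normalizer hCnormB).1 hxBC)
  set C₁ := closure (S ∩ (C : Set G))
  set B₁ := closure (C₁.conjugatesBy (S ∩ B))
  set A₁ := closure ((B₁ ⊔ C₁).conjugatesBy (S ∩ A))
  have hC₁ : C₁ ≤ C := (closure_le _).2 Set.inter_subset_right
  have hB₁ : B₁ ≤ B := closure_conjugatesBy_le Set.inter_subset_right (hC₁.trans hCnormB)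
  have hA₁ : A₁ ≤ A := closure_conjugatesBy_le Set.inter_subset_right
    ((sup_le_sup hB₁ hC₁).trans hBCnormA')
  have hC₁B₁ : C₁ ≤ normalizer (B₁ : Set G) := le_normalizer_closure_conjugatesBy _ _
  have hKA₁ : B₁ ⊔ C₁ ≤ normalizer (A₁ : Set G) := le_normalizer_closure_conjugatesBy _ _
  have hSeq : closure S = A₁ ⊔ (B₁ ⊔ C₁) := by
    rw [closure_eq_sup_of_subset_union hS, closure_sup_eq_closure_conjugatesBy_sup (S ∩ B),
      closure_sup_eq_closure_conjugatesBy_sup (S ∩ A)]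
  have hSA : closure S ⊓ A = A₁ :=
    hSeq ▸ sup_inf_left_eq_of_disjoint hA_BC hA₁ (sup_le_sup hB₁ hC₁) hKA₁
  have hSBC : closure S ⊓ (B ⊔ C) = B₁ ⊔ C₁ :=
    hSeq ▸ sup_inf_right_eq_of_disjoint hA_BC hA₁ (sup_le_sup hB₁ hC₁) hKA₁
  have hSB : closure S ⊓ B = B₁ := by
    rw [← inf_of_le_right (le_sup_left : B ≤ B ⊔ C), ← inf_assoc, hSBC]
    exact sup_inf_left_eq_of_disjoint (disjoint_iff.2 hBC) hB₁ hC₁ hC₁B₁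
  have hSC : closure S ⊓ C = C₁ := by
    rw [← inf_of_le_right (le_sup_right : C ≤ B ⊔ C), ← inf_assoc, hSBC]
    exact sup_inf_right_eq_of_disjoint (disjoint_iff.2 hBC) hB₁ hC₁ hC₁B₁
  refine ⟨hSC, hSB, by rw [hSB, hSC, ← conjugatesBy_sup_eq hC₁B₁, hSA], ?_⟩
  intro g hg
  obtain ⟨a, ha, k, hk, rfl⟩ := (mem_sup_iff_of_le_normalizer hKA₁).1 (hSeq ▸ hg)
  obtain ⟨b, hb, c, hc, rfl⟩ := (mem_sup_iff_of_le_normalizer hC₁B₁).1 hk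
  exact ⟨a, hSA ▸ ha, b, hSB ▸ hb, c, hSC ▸ hc, (mul_assoc a b c).symm⟩

/-- Let `G = [A[BC]]` be a ternary inner semidirect product:
`C` normalizes `B`, `B ∩ C = {e}`, the product set `BC` normalizes `A`, `A ∩ BC = {e}`,
and `G = ABC`.  Let `S ⊆ A ∪ B ∪ C` be atomic.  Then
(i) `⟨S⟩ ∩ C = ⟨S ∩ C⟩`;
(ii) `⟨S⟩ ∩ B = ⟨(S ∩ B)^{⟨S ∩ C⟩}⟩`;
(iii) `⟨S⟩ ∩ A = ⟨(S ∩ A)^{(⟨S⟩ ∩ B)(⟨S⟩ ∩ C)}⟩`;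
(iv) every `h ∈ ⟨S⟩` factors as `h = a·b·c` with `a ∈ ⟨S⟩ ∩ A`, `b ∈ ⟨S⟩ ∩ B`,
`c ∈ ⟨S⟩ ∩ C`. -/
theorem stmt_6 {G : Type*} [Group G] (A B C : Subgroup G)
    (hCnormB : C ≤ Subgroup.normalizer (B : Set G))
    (hBC : B ⊓ C = ⊥)
    (hBCnormA : ∀ k : G, (∃ b ∈ B, ∃ c ∈ C, k = b * c) → k ∈ Subgroup.normalizer (A : Set G))
    (hABC : ∀ x : G, x ∈ A → (∃ b ∈ B, ∃ c ∈ C, x = b * c) → x = 1)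
    (hprod : ∀ g : G, ∃ a ∈ A, ∃ b ∈ B, ∃ c ∈ C, g = a * b * c)
    (S : Set G) (hS : S ⊆ (A : Set G) ∪ (B : Set G) ∪ (C : Set G)) :
    Subgroup.closure S ⊓ C = Subgroup.closure (S ∩ (C : Set G)) ∧
    Subgroup.closure S ⊓ B =
      Subgroup.closure
        {x | ∃ b ∈ S ∩ (B : Set G), ∃ c ∈ Subgroup.closure (S ∩ (C : Set G)),
          x = c * b * c⁻¹} ∧
    Subgroup.closure S ⊓ A =
      Subgroup.closure
        {x | ∃ a ∈ S ∩ (A : Set G), ∃ k : G,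
          (∃ b ∈ Subgroup.closure S ⊓ B, ∃ c ∈ Subgroup.closure S ⊓ C, k = b * c) ∧
          x = k * a * k⁻¹} ∧
    (∀ h ∈ Subgroup.closure S,
      ∃ a ∈ Subgroup.closure S ⊓ A, ∃ b ∈ Subgroup.closure S ⊓ B,
        ∃ c ∈ Subgroup.closure S ⊓ C, h = a * b * c) :=
  stmt_6_general A B C hCnormB hBC hBCnormA hABC S hS
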